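/- arXiv:1710.05979 — 7 statements merged into one kernel-verified Lean document; each statement's English description precedes it below -/
import Mathlib

section
/- There are exactly 3 non-chromatic scales with 8 elements, namely the translates of the diminished scale {0,2,3,5,6,8,9,11}; this scale has exactly 3 distinct translates t + {0,2,3,5,6,8,9,11} as t ranges over ZMod 12. -/
/-- A scale is a finite subset of the twelve pitch classes `ZMod 12`.
It is non-chromatic if it contains no three consecutive pitch classes. -/
def NonChromatic (S : Finset (ZMod 12)) : Prop :=
  ∀ t : ZMod 12, ¬(t ∈ S ∧ t + 1 ∈ S ∧ t + 2 ∈ S)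

instance : DecidablePred NonChromatic := fun S => by
  unfold NonChromatic; infer_instance

/-- A non-chromatic scale is maximal if every scale strictly containing it
fails to be non-chromatic. -/
def MaximalNC (S : Finset (ZMod 12)) : Prop :=
  NonChromatic S ∧ ∀ T : Finset (ZMod 12), S ⊂ T → ¬ NonChromatic T

instance : DecidablePred MaximalNC := fun S => by
  unfold MaximalNC; infer_instance

/-- The translateScale `t + S` of a scale. -/
def translateScale (t : ZMod 12) (S : Finset (ZMod 12)) : Finset (ZMod 12) :=
  S.image (fun x => t + x)

lemma mem_translateScale {t x : ZMod 12} {S : Finset (ZMod 12)} :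
    x ∈ translateScale t S ↔ -t + x ∈ S := by
  simp only [translateScale, Finset.mem_image]
  constructor
  · rintro ⟨y, hy, rfl⟩; simpa
  · intro h; exact ⟨-t + x, h, by ring⟩

lemma card_translateScale (t : ZMod 12) (S : Finset (ZMod 12)) :
    (translateScale t S).card = S.card :=
  Finset.card_image_of_injective _ (add_right_injective t)

lemma nonChromatic_translateScale {S : Finset (ZMod 12)} (h : NonChromatic S) (t : ZMod 12) :
    NonChromatic (translateScale t S) := by
  intro u hu
  rw [mem_translateScale, mem_translateScale, mem_translateScale] at hu
  refine h (-t + u) ⟨hu.1, ?_, ?_⟩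
  · have := hu.2.1; rwa [show -t + (u + 1) = -t + u + 1 by ring] at this
  · have := hu.2.2; rwa [show -t + (u + 2) = -t + u + 2 by ring] at this

lemma translateScale_translateScale (a b : ZMod 12) (S : Finset (ZMod 12)) :
    translateScale a (translateScale b S) = translateScale (a + b) S := by
  simp only [translateScale, Finset.image_image]
  apply Finset.image_congr
  intro x _; simp [add_assoc]

-- window bound
lemma window_le (S : Finset (ZMod 12)) (a b c : ZMod 12)
    (h : ¬(a ∈ S ∧ b ∈ S ∧ c ∈ S)) : (S ∩ {a, b, c}).card ≤ 2 := by
  obtain ⟨x, hxm, hxS⟩ : ∃ x ∈ ({a,b,c} : Finset (ZMod 12)), x ∉ S := by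
    by_contra hco
    push_neg at hco
    exact h ⟨hco a (by simp), hco b (by simp), hco c (by simp)⟩
  have hsub : S ∩ {a,b,c} ⊆ ({a,b,c} : Finset (ZMod 12)).erase x := by
    intro y hy
    rw [Finset.mem_erase]
    exact ⟨fun hyx => hxS (hyx ▸ (Finset.mem_inter.mp hy).1), (Finset.mem_inter.mp hy).2⟩
  have h3 : ({a,b,c} : Finset (ZMod 12)).card ≤ 3 := by
    refine (Finset.card_insert_le _ _).trans ?_
    have : ({b,c} : Finset (ZMod 12)).card ≤ 2 :=
      (Finset.card_insert_le _ _).trans (by simp)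
    omega
  calc (S ∩ {a,b,c}).card ≤ _ := Finset.card_le_card hsub
    _ = ({a,b,c} : Finset (ZMod 12)).card - 1 := Finset.card_erase_of_mem hxm
    _ ≤ 2 := by omega

lemma window_mem (S : Finset (ZMod 12)) {a b c : ZMod 12} (hbc : b ≠ c)
    (ha : a ∉ S) (hcard : (S ∩ {a, b, c}).card = 2) : b ∈ S ∧ c ∈ S := by
  have hsub : S ∩ {a,b,c} ⊆ {b,c} := by
    intro x hx
    simp only [Finset.mem_inter, Finset.mem_insert, Finset.mem_singleton] at hx ⊢
    rcases hx.2 with rfl | h2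
    · exact absurd hx.1 ha
    · exact h2
  have hc2 : ({b, c} : Finset (ZMod 12)).card = 2 := by
    rw [Finset.card_insert_of_notMem (by simpa using hbc), Finset.card_singleton]
  have heq : S ∩ {a,b,c} = {b,c} :=
    Finset.eq_of_subset_of_card_le hsub (by rw [hc2, hcard])
  constructor
  · have hb : b ∈ ({b,c} : Finset (ZMod 12)) := by simp
    rw [← heq] at hb
    exact (Finset.mem_inter.mp hb).1
  · have hc : c ∈ ({b,c} : Finset (ZMod 12)) := by simp
    rw [← heq] at hc
    exact (Finset.mem_inter.mp hc).1

-- partition card lemma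
lemma card_partition (S : Finset (ZMod 12)) (W0 W1 W2 W3 : Finset (ZMod 12))
    (huniv : W0 ∪ W1 ∪ W2 ∪ W3 = Finset.univ)
    (h01 : Disjoint W0 W1) (h02 : Disjoint W0 W2) (h03 : Disjoint W0 W3)
    (h12 : Disjoint W1 W2) (h13 : Disjoint W1 W3) (h23 : Disjoint W2 W3) :
    S.card = (S ∩ W0).card + (S ∩ W1).card + (S ∩ W2).card + (S ∩ W3).card := by
  have D : ∀ {A B : Finset (ZMod 12)}, Disjoint A B → Disjoint (S ∩ A) (S ∩ B) :=
    fun h => Finset.disjoint_of_subset_left Finset.inter_subset_right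
      (Finset.disjoint_of_subset_right Finset.inter_subset_right h)
  have hS : S = (S ∩ W0) ∪ (S ∩ W1) ∪ (S ∩ W2) ∪ (S ∩ W3) := by
    rw [← Finset.inter_union_distrib_left, ← Finset.inter_union_distrib_left,
      ← Finset.inter_union_distrib_left, huniv, Finset.inter_univ]
  have d3 : Disjoint ((S ∩ W0) ∪ (S ∩ W1) ∪ (S ∩ W2)) (S ∩ W3) :=
    Finset.disjoint_union_left.mpr ⟨Finset.disjoint_union_left.mpr ⟨D h03, D h13⟩, D h23⟩
  have d2 : Disjoint ((S ∩ W0) ∪ (S ∩ W1)) (S ∩ W2) :=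
    Finset.disjoint_union_left.mpr ⟨D h02, D h12⟩
  conv_lhs => rw [hS]
  rw [Finset.card_union_of_disjoint d3, Finset.card_union_of_disjoint d2,
    Finset.card_union_of_disjoint (D h01)]

-- main structural lemma: 0 ∉ T case
lemma key (T : Finset (ZMod 12)) (hnc : NonChromatic T) (hcard : T.card = 8)
    (h0 : (0 : ZMod 12) ∉ T) : T = ({1,2,4,5,7,8,10,11} : Finset (ZMod 12)) := by
  -- partition 0: {0,1,2},{3,4,5},{6,7,8},{9,10,11}
  have hp0 := card_partition T {0,1,2} {3,4,5} {6,7,8} {9,10,11}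
    (by decide) (by decide) (by decide) (by decide) (by decide) (by decide) (by decide)
  have b0 := window_le T 0 1 2 (hnc 0)
  have b3 := window_le T 3 4 5 (hnc 3)
  have b6 := window_le T 6 7 8 (hnc 6)
  have b9 := window_le T 9 10 11 (hnc 9)
  have e0 : (T ∩ {0,1,2}).card = 2 := by omega
  have e3 : (T ∩ {3,4,5}).card = 2 := by omega
  have e6 : (T ∩ {6,7,8}).card = 2 := by omega
  have e9 : (T ∩ {9,10,11}).card = 2 := by omega
  -- partition 1: {1,2,3},{4,5,6},{7,8,9},{10,11,0}
  have hp1 := card_partition T {1,2,3} {4,5,6} {7,8,9} {10,11,0}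
    (by decide) (by decide) (by decide) (by decide) (by decide) (by decide) (by decide)
  have c1 := window_le T 1 2 3 (hnc 1)
  have c4 := window_le T 4 5 6 (hnc 4)
  have c7 := window_le T 7 8 9 (hnc 7)
  have c10 := window_le T 10 11 0 (hnc 10)
  have f10 : (T ∩ {10,11,0}).card = 2 := by omega
  -- extract memberships
  obtain ⟨m1, m2⟩ := window_mem T (by decide) h0 e0
  have f10' : (T ∩ {0,10,11}).card = 2 := by
    have : ({10,11,0} : Finset (ZMod 12)) = {0,10,11} := by decide
    rwa [this] at f10
  obtain ⟨m10, m11⟩ := window_mem T (by decide) h0 f10'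
  have h3 : (3 : ZMod 12) ∉ T := fun h3 => hnc 1 ⟨m1, m2, h3⟩
  obtain ⟨m4, m5⟩ := window_mem T (by decide) h3 e3
  have h6 : (6 : ZMod 12) ∉ T := fun h6 => hnc 4 ⟨m4, m5, h6⟩
  obtain ⟨m7, m8⟩ := window_mem T (by decide) h6 e6
  have hsub : ({1,2,4,5,7,8,10,11} : Finset (ZMod 12)) ⊆ T := by
    intro x hx
    fin_cases hx <;> assumption
  exact (Finset.eq_of_subset_of_card_le hsub (by rw [hcard]; decide)).symm

lemma part2 (S : Finset (ZMod 12)) (hnc : NonChromatic S) (hcard : S.card = 8) :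
    ∃ t : ZMod 12, S = translateScale t ({0,2,3,5,6,8,9,11} : Finset (ZMod 12)) := by
  have hne : (Finset.univ \ S).Nonempty := by
    rw [← Finset.card_pos, Finset.card_sdiff_of_subset (Finset.subset_univ S)]
    rw [hcard]; decide
  obtain ⟨c, hc⟩ := hne
  have hcS : c ∉ S := (Finset.mem_sdiff.mp hc).2
  set T := translateScale (-c) S with hT
  have h0 : (0 : ZMod 12) ∉ T := by
    rw [hT, mem_translateScale]
    simpa using hcS
  have hTnc : NonChromatic T := nonChromatic_translateScale hnc _
  have hTcard : T.card = 8 := by rw [hT, card_translateScale]; exact hcard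
  have hTeq := key T hTnc hTcard h0
  have hD : ({1,2,4,5,7,8,10,11} : Finset (ZMod 12)) =
      translateScale 11 ({0,2,3,5,6,8,9,11} : Finset (ZMod 12)) := by decide
  refine ⟨c + 11, ?_⟩
  have : translateScale c T = S := by
    rw [hT, translateScale_translateScale]
    simp [translateScale]
  rw [← this, hTeq, hD, translateScale_translateScale]

theorem nonchromatic_eight_note_scales :
    (Finset.univ.filter (fun S : Finset (ZMod 12) => NonChromatic S ∧ S.card = 8)).card = 3 ∧
    (∀ S : Finset (ZMod 12), NonChromatic S → S.card = 8 →
      ∃ t : ZMod 12, S = translateScale t ({0,2,3,5,6,8,9,11} : Finset (ZMod 12))) ∧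
    (Finset.univ.image
      (fun t : ZMod 12 => translateScale t ({0,2,3,5,6,8,9,11} : Finset (ZMod 12)))).card = 3 := by
  have h3 : (Finset.univ.image
      (fun t : ZMod 12 => translateScale t ({0,2,3,5,6,8,9,11} : Finset (ZMod 12)))).card = 3 := by
    decide
  have hback : ∀ t : ZMod 12,
      NonChromatic (translateScale t ({0,2,3,5,6,8,9,11} : Finset (ZMod 12))) ∧
      (translateScale t ({0,2,3,5,6,8,9,11} : Finset (ZMod 12))).card = 8 := by
    intro t
    exact ⟨nonChromatic_translateScale (by decide) t, by rw [card_translateScale]; decide⟩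
  have hset : Finset.univ.filter (fun S : Finset (ZMod 12) => NonChromatic S ∧ S.card = 8) =
      Finset.univ.image
        (fun t : ZMod 12 => translateScale t ({0,2,3,5,6,8,9,11} : Finset (ZMod 12))) := by
    ext S
    simp only [Finset.mem_filter, Finset.mem_image, Finset.mem_univ, true_and]
    constructor
    · rintro ⟨h1, h2⟩
      obtain ⟨t, ht⟩ := part2 S h1 h2
      exact ⟨t, ht.symm⟩
    · rintro ⟨t, rfl⟩
      exact hback t
  exact ⟨by rw [hset]; exact h3, part2, h3⟩
end

section
/- The f-vector of the complex of non-chromatic scales is (1, 12, 66, 208, 399, 456, 282, 72, 3): the number of non-chromatic scales with exactly k elements is 1 for k = 0, 12 for k = 1, 66 for k = 2, 208 for k = 3, 399 for k = 4, 456 for k = 5, 282 for k = 6, 72 for k = 7, 3 for k = 8, and 0 for k ≥ 9. -/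
/-! The counts for `k ≤ 8` are finite checks over the `2 ^ 12` scales, carried out by kernel
evaluation. No non-chromatic scale has nine or more notes: the windows `{t, t + 1, t + 2}` for
`t ∈ {0, 3, 6, 9}` cover `ZMod 12`, and a non-chromatic scale meets each of them in at most two
notes. -/

theorem Finset.card_le_mul_of_forall_card_inter_le {α ι : Type*} [DecidableEq α]
    {S : Finset α} {I : Finset ι} {W : ι → Finset α} {m : ℕ}
    (hcover : ∀ a ∈ S, ∃ i ∈ I, a ∈ W i) (hW : ∀ i ∈ I, (S ∩ W i).card ≤ m) :
    S.card ≤ I.card * m := by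
  have hS : S ⊆ I.biUnion fun i => S ∩ W i := fun a ha => by
    obtain ⟨i, hi, haW⟩ := hcover a ha
    exact Finset.mem_biUnion.2 ⟨i, hi, Finset.mem_inter.2 ⟨ha, haW⟩⟩
  calc S.card ≤ (I.biUnion fun i => S ∩ W i).card := Finset.card_le_card hS
    _ ≤ ∑ i ∈ I, (S ∩ W i).card := Finset.card_biUnion_le
    _ ≤ I.card * m := Finset.sum_le_card_nsmul _ _ _ hW

theorem NonChromatic.card_inter_le_two {S : Finset (ZMod 12)} (h : NonChromatic S)
    (t : ZMod 12) : (S ∩ {t, t + 1, t + 2}).card ≤ 2 := by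
  by_contra! hlt
  have hsub : {t, t + 1, t + 2} ⊆ S :=
    Finset.inter_eq_right.1 <| Finset.eq_of_subset_of_card_le Finset.inter_subset_right
      (Finset.card_le_three.trans hlt)
  exact h t ⟨hsub (by simp), hsub (by simp), hsub (by simp)⟩

theorem NonChromatic.card_le_eight {S : Finset (ZMod 12)} (h : NonChromatic S) :
    S.card ≤ 8 := by
  have hcover : ∀ a : ZMod 12, ∃ t ∈ ({0, 3, 6, 9} : Finset (ZMod 12)),
      a ∈ ({t, t + 1, t + 2} : Finset (ZMod 12)) := by
    decide
  exact Finset.card_le_mul_of_forall_card_inter_le (fun a _ => hcover a)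
    (fun t _ => h.card_inter_le_two t)

set_option maxHeartbeats 10000000 in
set_option maxRecDepth 10000 in
theorem f_vector_nonchromatic :
    (Finset.univ.filter (fun S : Finset (ZMod 12) => NonChromatic S ∧ S.card = 0)).card = 1 ∧
    (Finset.univ.filter (fun S : Finset (ZMod 12) => NonChromatic S ∧ S.card = 1)).card = 12 ∧
    (Finset.univ.filter (fun S : Finset (ZMod 12) => NonChromatic S ∧ S.card = 2)).card = 66 ∧
    (Finset.univ.filter (fun S : Finset (ZMod 12) => NonChromatic S ∧ S.card = 3)).card = 208 ∧
    (Finset.univ.filter (fun S : Finset (ZMod 12) => NonChromatic S ∧ S.card = 4)).card = 399 ∧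
    (Finset.univ.filter (fun S : Finset (ZMod 12) => NonChromatic S ∧ S.card = 5)).card = 456 ∧
    (Finset.univ.filter (fun S : Finset (ZMod 12) => NonChromatic S ∧ S.card = 6)).card = 282 ∧
    (Finset.univ.filter (fun S : Finset (ZMod 12) => NonChromatic S ∧ S.card = 7)).card = 72 ∧
    (Finset.univ.filter (fun S : Finset (ZMod 12) => NonChromatic S ∧ S.card = 8)).card = 3 ∧
    (∀ k : ℕ, 9 ≤ k →
      (Finset.univ.filter (fun S : Finset (ZMod 12) => NonChromatic S ∧ S.card = k)).card = 0) := by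
  refine ⟨by decide, by decide, by decide, by decide, by decide, by decide, by decide,
    by decide, by decide, fun k hk => ?_⟩
  rw [Finset.card_eq_zero, Finset.filter_eq_empty_iff]
  rintro S - ⟨hS, rfl⟩
  exact absurd hS.card_le_eight (by omega)
end

section
/- There are exactly 57 maximal non-chromatic scales. -/
/-! Non-chromaticity passes to subsets, so a non-chromatic scale is maximal as soon as adding any
single missing pitch class creates three consecutive ones. Encoding a scale by the 12-bit number
whose binary digits are its indicator turns both conditions into bit tests, and the count becomes a
direct evaluation over the numbers below `2 ^ 12`. -/

open Finset

theorem NonChromatic.mono {S T : Finset (ZMod 12)} (hST : S ⊆ T) (hT : NonChromatic T) :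
    NonChromatic S :=
  fun t ht => hT t ⟨hST ht.1, hST ht.2.1, hST ht.2.2⟩

theorem maximalNC_iff_forall_insert {S : Finset (ZMod 12)} :
    MaximalNC S ↔ NonChromatic S ∧ ∀ x ∉ S, ¬ NonChromatic (insert x S) := by
  refine and_congr_right fun _ => ⟨fun h x hx => h _ (ssubset_insert hx), fun h T hST hT => ?_⟩
  obtain ⟨x, hxT, hxS⟩ := exists_of_ssubset hST
  exact h x hxS (hT.mono (insert_subset hxT hST.subset))

def ofBits (m : ℕ) [NeZero m] (k : ℕ) : Finset (ZMod m) := {i | k.testBit i.val}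

section Bits

variable {m : ℕ} [NeZero m]

@[simp]
theorem mem_ofBits {k : ℕ} {i : ZMod m} : i ∈ ofBits m k ↔ k.testBit i.val := by
  simp [ofBits]

theorem insert_ofBits (k : ℕ) (x : ZMod m) :
    insert x (ofBits m k) = ofBits m (k ||| 2 ^ x.val) := by
  ext i
  simp only [mem_insert, mem_ofBits, Nat.testBit_or, Nat.testBit_two_pow, Bool.or_eq_true,
    decide_eq_true_eq, (ZMod.val_injective m).eq_iff, eq_comm (a := x), or_comm]

theorem ofBits_injOn : Set.InjOn (ofBits m) (Set.Iio (2 ^ m)) := by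
  intro a ha b hb hab
  refine Nat.eq_of_testBit_eq fun i => ?_
  rcases lt_or_ge i m with hi | hi
  · have hval : (i : ZMod m).val = i := ZMod.val_natCast_of_lt hi
    simpa [hval] using congrArg ((i : ZMod m) ∈ ·) hab
  · have hpow : 2 ^ m ≤ 2 ^ i := Nat.pow_le_pow_right two_pos hi
    rw [Nat.testBit_eq_false_of_lt (lt_of_lt_of_le ha hpow),
      Nat.testBit_eq_false_of_lt (lt_of_lt_of_le hb hpow)]

theorem image_ofBits_range : (range (2 ^ m)).image (ofBits m) = univ := by
  refine eq_univ_of_card _ ?_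
  rw [card_image_of_injOn (coe_range _ ▸ ofBits_injOn), card_range,
    Fintype.card_finset, ZMod.card]

theorem card_filter_eq_count {P : Finset (ZMod m) → Prop} [DecidablePred P]
    {Q : ℕ → Prop} [DecidablePred Q] (hPQ : ∀ k < 2 ^ m, P (ofBits m k) ↔ Q k) :
    #{S | P S} = Nat.count Q (2 ^ m) := by
  rw [Nat.count_eq_card_filter_range, ← image_ofBits_range, filter_image,
    card_image_of_injOn (ofBits_injOn.mono fun k hk => mem_range.1 (mem_filter.1 hk).1)]
  exact congrArg card (filter_congr fun k hk => hPQ k (mem_range.1 hk))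

end Bits

/- These are `Bool`-valued `List.all` tests rather than decidable propositions because the
kernel evaluates them several times faster in `count_isMaximalNCBits`. -/
def isNonChromaticBits (k : ℕ) : Bool :=
  (List.range 12).all fun t =>
    !(k.testBit t && k.testBit ((t + 1) % 12) && k.testBit ((t + 2) % 12))

def isMaximalNCBits (k : ℕ) : Bool :=
  isNonChromaticBits k &&
    (List.range 12).all fun x => k.testBit x || !isNonChromaticBits (k ||| 2 ^ x)

theorem nonChromatic_ofBits_iff (k : ℕ) :
    NonChromatic (ofBits 12 k) ↔ isNonChromaticBits k := by
  have hval : ∀ t : ZMod 12, (t + 1).val = (t.val + 1) % 12 ∧ (t + 2).val = (t.val + 2) % 12 :=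
    fun t => ⟨ZMod.val_add .., ZMod.val_add ..⟩
  simp only [NonChromatic, isNonChromaticBits, mem_ofBits, List.all_eq_true, List.mem_range,
    Bool.not_eq_true', Bool.and_eq_false_iff, Bool.not_eq_true, not_and_or, or_assoc]
  constructor
  · intro h t ht
    simpa [hval, ZMod.val_natCast_of_lt ht] using h t
  · intro h t
    simpa [hval] using h t.val t.val_lt

theorem maximalNC_ofBits_iff (k : ℕ) : MaximalNC (ofBits 12 k) ↔ isMaximalNCBits k := by
  simp only [maximalNC_iff_forall_insert, isMaximalNCBits, Bool.and_eq_true, List.all_eq_true,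
    List.mem_range, Bool.or_eq_true, Bool.not_eq_true', insert_ofBits, nonChromatic_ofBits_iff,
    mem_ofBits]
  refine and_congr_right fun _ => ⟨fun h x hx => ?_, fun h x hx => ?_⟩
  · simpa [ZMod.val_natCast_of_lt hx, or_iff_not_imp_left] using h x
  · simpa [hx] using h x.val x.val_lt

theorem count_isMaximalNCBits : Nat.count (fun k => isMaximalNCBits k) (2 ^ 12) = 57 := by
  decide +kernel

theorem maximal_nonchromatic_count :
    (Finset.univ.filter (fun S : Finset (ZMod 12) => MaximalNC S)).card = 57 := by
  rw [card_filter_eq_count fun k _ => maximalNC_ofBits_iff k]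
  exact count_isMaximalNCBits
end

section
/- Classification of maximal non-chromatic scales: a scale S is a maximal non-chromatic scale if and only if S is a translate of one of the following seven scales: the diminished scale {0,2,3,5,6,8,9,11}, the major scale {0,2,4,5,7,9,11}, the melodic minor scale {0,2,3,5,7,9,11}, the harmonic minor scale {0,2,3,5,7,8,11}, the harmonic major scale {0,2,4,5,7,8,11}, the whole tone scale {0,2,4,6,8,10}, or the augmented scale {0,1,4,5,8,9}. -/
-- Nat-level
def ncN (m : Nat) : Prop :=
  ∀ i < 12, ¬(m.testBit i ∧ m.testBit ((i+1)%12) ∧ m.testBit ((i+2)%12))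
def maxN (m : Nat) : Prop :=
  ncN m ∧ ∀ i < 12, ¬ m.testBit i → ¬ ncN (m ||| (1 <<< i))
def eqRot (m t b : Nat) : Prop :=
  ∀ j < 12, m.testBit j = b.testBit ((j + 12 - t) % 12)

def rf1 : Nat → Nat := fun t => [2925, 1755, 3510, 2925, 1755, 3510, 2925, 1755, 3510, 2925, 1755, 3510].getD t 0
def rf2 : Nat → Nat := fun t => [2741, 1387, 2774, 1453, 2906, 1717, 3434, 2773, 1451, 2902, 1709, 3418].getD t 0
def rf3 : Nat → Nat := fun t => [2733, 1371, 2742, 1389, 2778, 1461, 2922, 1749, 3498, 2901, 1707, 3414].getD t 0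
def rf4 : Nat → Nat := fun t => [2477, 859, 1718, 3436, 2777, 1459, 2918, 1741, 3482, 2869, 1643, 3286].getD t 0
def rf5 : Nat → Nat := fun t => [2485, 875, 1750, 3500, 2905, 1715, 3430, 2765, 1435, 2870, 1645, 3290].getD t 0
def rf6 : Nat → Nat := fun t => [1365, 2730, 1365, 2730, 1365, 2730, 1365, 2730, 1365, 2730, 1365, 2730].getD t 0
def rf7 : Nat → Nat := fun t => [819, 1638, 3276, 2457, 819, 1638, 3276, 2457, 819, 1638, 3276, 2457].getD t 0

def rhsN (m : Nat) : Prop :=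
  ∃ t < 12, m = rf1 t ∨ m = rf2 t ∨ m = rf3 t ∨ m = rf4 t ∨ m = rf5 t ∨ m = rf6 t ∨ m = rf7 t

def ncB (m : Nat) : Bool :=
  (List.range 12).all (fun i => !(m.testBit i && m.testBit ((i+1)%12) && m.testBit ((i+2)%12)))
def maxB (m : Nat) : Bool :=
  ncB m && (List.range 12).all (fun i => m.testBit i || !ncB (m ||| (1 <<< i)))
def rhsB (m : Nat) : Bool :=
  (List.range 12).any (fun t => m == rf1 t || m == rf2 t || m == rf3 t || m == rf4 t || m == rf5 t || m == rf6 t || m == rf7 t)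

set_option maxRecDepth 2000 in
set_option maxHeartbeats 4000000 in
theorem bigCheck : ((List.range 16).all (fun a => (List.range 256).all
    (fun c => maxB (256*a+c) == rhsB (256*a+c)))) = true := by decide

-- Bool/Prop bridges
lemma ncB_iff (m : Nat) : ncB m = true ↔ ncN m := by
  simp [ncB, ncN, List.all_eq_true, List.mem_range]
  constructor
  · intro a i h1 h2 h3
    rcases a i h1 with (h | h) | h
    · exact absurd h2 (by simp [h])
    · exact absurd h3 (by simp [h])
    · exact h
  · intro a x hx
    by_cases h1 : m.testBit x
    · by_cases h2 : m.testBit ((x+1)%12)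
      · exact Or.inr (a x hx h1 h2)
      · exact Or.inl (Or.inr (by simpa using h2))
    · exact Or.inl (Or.inl (by simpa using h1))

lemma maxB_iff (m : Nat) : maxB m = true ↔ maxN m := by
  have h : ∀ k, ncB k = false ↔ ¬ ncN k := by
    intro k; rw [← ncB_iff]; simp
  simp only [maxB, maxN, Bool.and_eq_true, List.all_eq_true, List.mem_range, ncB_iff,
    Bool.or_eq_true, Bool.not_eq_true', h]
  constructor
  · rintro ⟨a, b⟩
    exact ⟨a, fun i hi hb => ((b i hi).resolve_left hb)⟩
  · rintro ⟨a, b⟩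
    refine ⟨a, fun i hi => ?_⟩
    by_cases hb : m.testBit i
    · exact Or.inl hb
    · exact Or.inr (b i hi hb)

lemma rhsB_iff (m : Nat) : rhsB m = true ↔ rhsN m := by
  simp [rhsB, rhsN, List.any_eq_true, List.mem_range]
  aesop

lemma key_s6 : ∀ m < 4096, (maxN m ↔ rhsN m) := by
  intro m hm
  have h1 : m / 256 < 16 := Nat.div_lt_of_lt_mul hm
  have h2 : m % 256 < 256 := Nat.mod_lt _ (by norm_num)
  have := bigCheck
  rw [List.all_eq_true] at this
  have := this _ (List.mem_range.mpr h1)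
  rw [List.all_eq_true] at this
  have := this _ (List.mem_range.mpr h2)
  rw [Nat.div_add_mod m 256, beq_iff_eq] at this
  rw [← maxB_iff, ← rhsB_iff, this]

-- ZMod bridge
def ofMask (m : Nat) : Finset (ZMod 12) := Finset.univ.filter (fun i => m.testBit i.val)

lemma mem_ofMask {m : Nat} {i : ZMod 12} : i ∈ ofMask m ↔ m.testBit i.val := by
  simp [ofMask]

lemma valAdd1 : ∀ t : ZMod 12, (t+1).val = (t.val+1)%12 := by decide
lemma valAdd2 : ∀ t : ZMod 12, (t+2).val = (t.val+2)%12 := by decide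
lemma valSub : ∀ a b : ZMod 12, (a-b).val = (a.val + 12 - b.val) % 12 := by decide
lemma bitInsert : ∀ x i : ZMod 12, (1 <<< x.val).testBit i.val = decide (i = x) := by decide

lemma nc_bridge (m : Nat) : NonChromatic (ofMask m) ↔ ncN m := by
  constructor
  · intro h i hi
    have := h (i : ZMod 12)
    rwa [mem_ofMask, mem_ofMask, mem_ofMask, valAdd1, valAdd2,
      ZMod.val_cast_of_lt hi] at this
  · intro h t
    have := h t.val (ZMod.val_lt t)
    rwa [mem_ofMask, mem_ofMask, mem_ofMask, valAdd1, valAdd2]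
lemma insert_ofMask (x : ZMod 12) (m : Nat) :
    insert x (ofMask m) = ofMask (m ||| (1 <<< x.val)) := by
  ext i
  simp only [Finset.mem_insert, mem_ofMask, Nat.testBit_or, bitInsert, Bool.or_eq_true,
    decide_eq_true_eq]
  tauto

lemma nc_anti {T T' : Finset (ZMod 12)} (h : T ⊆ T') (h' : NonChromatic T') :
    NonChromatic T := fun t ⟨a,b,c⟩ => h' t ⟨h a, h b, h c⟩

lemma max_bridge (m : Nat) : MaximalNC (ofMask m) ↔ maxN m := by
  constructor
  · rintro ⟨h1, h2⟩
    refine ⟨(nc_bridge m).mp h1, fun i hi hbit hnc => ?_⟩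
    have hx : (i : ZMod 12) ∉ ofMask m := by
      rw [mem_ofMask, ZMod.val_cast_of_lt hi]; simp [hbit]
    refine h2 _ (Finset.ssubset_insert hx) ?_
    rw [insert_ofMask, ZMod.val_cast_of_lt hi]
    exact (nc_bridge _).mpr hnc
  · rintro ⟨h1, h2⟩
    refine ⟨(nc_bridge m).mpr h1, fun T hT hnc => ?_⟩
    obtain ⟨x, hxT, hxS⟩ := Finset.exists_of_ssubset hT
    have hbit : ¬ m.testBit x.val := fun hb => hxS (mem_ofMask.mpr hb)
    refine h2 x.val (ZMod.val_lt x) hbit ?_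
    rw [← nc_bridge, ← insert_ofMask]
    exact nc_anti (Finset.insert_subset hxT hT.subset) hnc

lemma translate_bridge (m : Nat) (t : ZMod 12) (b : Nat) :
    ofMask m = translateScale t (ofMask b) ↔ eqRot m t.val b := by
  have hmem : ∀ i : ZMod 12, i ∈ translateScale t (ofMask b) ↔ b.testBit (i - t).val := by
    intro i
    simp only [translateScale, Finset.mem_image, mem_ofMask]
    constructor
    · rintro ⟨x, hx, rfl⟩; simpa using hx
    · intro h; exact ⟨i - t, h, by ring⟩
  constructor
  · intro h j hj
    have := Finset.ext_iff.mp h ((j : ZMod 12))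
    rw [mem_ofMask, hmem, valSub, ZMod.val_cast_of_lt hj] at this
    exact Bool.coe_iff_coe.mp this
  · intro h
    ext i
    rw [mem_ofMask, hmem, valSub]
    exact Bool.coe_iff_coe.mpr (h i.val (ZMod.val_lt i))

def mk1 : Nat := 2925
def mk2 : Nat := 2741
def mk3 : Nat := 2733
def mk4 : Nat := 2477
def mk5 : Nat := 2485
def mk6 : Nat := 1365
def mk7 : Nat := 819

lemma bitsEq {m r : Nat} (hm : m < 4096) (hr : r < 4096) :
    (∀ j < 12, m.testBit j = r.testBit j) ↔ m = r := by
  constructor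
  · intro h
    apply Nat.eq_of_testBit_eq
    intro j
    by_cases hj : j < 12
    · exact h j hj
    · have h12 : (4096 : ℕ) ≤ 2 ^ j := by
        calc (4096 : ℕ) = 2 ^ 12 := by norm_num
        _ ≤ 2 ^ j := Nat.pow_le_pow_right (by norm_num) (Nat.le_of_not_lt hj)
      rw [Nat.testBit_lt_two_pow (lt_of_lt_of_le hm h12),
        Nat.testBit_lt_two_pow (lt_of_lt_of_le hr h12)]
  · rintro rfl j _; rfl

lemma rotTab1 : ∀ t < 12, (∀ j < 12, mk1.testBit ((j + 12 - t) % 12) = (rf1 t).testBit j) ∧ rf1 t < 4096 := by decide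
lemma rotTab2 : ∀ t < 12, (∀ j < 12, mk2.testBit ((j + 12 - t) % 12) = (rf2 t).testBit j) ∧ rf2 t < 4096 := by decide
lemma rotTab3 : ∀ t < 12, (∀ j < 12, mk3.testBit ((j + 12 - t) % 12) = (rf3 t).testBit j) ∧ rf3 t < 4096 := by decide
lemma rotTab4 : ∀ t < 12, (∀ j < 12, mk4.testBit ((j + 12 - t) % 12) = (rf4 t).testBit j) ∧ rf4 t < 4096 := by decide
lemma rotTab5 : ∀ t < 12, (∀ j < 12, mk5.testBit ((j + 12 - t) % 12) = (rf5 t).testBit j) ∧ rf5 t < 4096 := by decide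
lemma rotTab6 : ∀ t < 12, (∀ j < 12, mk6.testBit ((j + 12 - t) % 12) = (rf6 t).testBit j) ∧ rf6 t < 4096 := by decide
lemma rotTab7 : ∀ t < 12, (∀ j < 12, mk7.testBit ((j + 12 - t) % 12) = (rf7 t).testBit j) ∧ rf7 t < 4096 := by decide

lemma eqRot_iff {m : Nat} (hm : m < 4096) {t : Nat} (ht : t < 12) (b : Nat) (rf : Nat → Nat)
    (tab : ∀ t < 12, (∀ j < 12, b.testBit ((j + 12 - t) % 12) = (rf t).testBit j) ∧ rf t < 4096) :
    eqRot m t b ↔ m = rf t := by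
  obtain ⟨htab, hlt⟩ := tab t ht
  rw [← bitsEq hm hlt]
  unfold eqRot
  constructor
  · intro h j hj; rw [h j hj, htab j hj]
  · intro h j hj; rw [h j hj, htab j hj]

lemma s1 : ({0,2,3,5,6,8,9,11} : Finset (ZMod 12)) = ofMask mk1 := by decide
lemma s2 : ({0,2,4,5,7,9,11} : Finset (ZMod 12)) = ofMask mk2 := by decide
lemma s3 : ({0,2,3,5,7,9,11} : Finset (ZMod 12)) = ofMask mk3 := by decide
lemma s4 : ({0,2,3,5,7,8,11} : Finset (ZMod 12)) = ofMask mk4 := by decide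
lemma s5 : ({0,2,4,5,7,8,11} : Finset (ZMod 12)) = ofMask mk5 := by decide
lemma s6 : ({0,2,4,6,8,10} : Finset (ZMod 12)) = ofMask mk6 := by decide
lemma s7 : ({0,1,4,5,8,9} : Finset (ZMod 12)) = ofMask mk7 := by decide

lemma exists_mask (S : Finset (ZMod 12)) : ∃ m : Fin 4096, S = ofMask m.val := by
  have hinj : Function.Injective (fun m : Fin 4096 => ofMask m.val) := by
    intro a b h
    apply Fin.ext
    apply Nat.eq_of_testBit_eq
    intro j
    by_cases hj : j < 12
    · have := Finset.ext_iff.mp h ((j : ZMod 12))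
      rw [mem_ofMask, mem_ofMask, ZMod.val_cast_of_lt hj] at this
      exact Bool.coe_iff_coe.mp this
    · have h12 : (4096 : ℕ) ≤ 2 ^ j := by
        calc (4096 : ℕ) = 2 ^ 12 := by norm_num
        _ ≤ 2 ^ j := Nat.pow_le_pow_right (by norm_num) (Nat.le_of_not_lt hj)
      rw [Nat.testBit_lt_two_pow (lt_of_lt_of_le a.isLt h12),
        Nat.testBit_lt_two_pow (lt_of_lt_of_le b.isLt h12)]
  have hsurj := ((Fintype.bijective_iff_injective_and_card _).mpr
    ⟨hinj, by rw [Fintype.card_finset, ZMod.card 12, Fintype.card_fin]; norm_num⟩).surjective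
  obtain ⟨m, hm⟩ := hsurj S
  exact ⟨m, hm.symm⟩

set_option maxRecDepth 4000 in
theorem maximal_nonchromatic_classification (S : Finset (ZMod 12)) :
    MaximalNC S ↔ ∃ t : ZMod 12,
      S = translateScale t ({0,2,3,5,6,8,9,11} : Finset (ZMod 12)) ∨
      S = translateScale t ({0,2,4,5,7,9,11} : Finset (ZMod 12)) ∨
      S = translateScale t ({0,2,3,5,7,9,11} : Finset (ZMod 12)) ∨
      S = translateScale t ({0,2,3,5,7,8,11} : Finset (ZMod 12)) ∨
      S = translateScale t ({0,2,4,5,7,8,11} : Finset (ZMod 12)) ∨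
      S = translateScale t ({0,2,4,6,8,10} : Finset (ZMod 12)) ∨
      S = translateScale t ({0,1,4,5,8,9} : Finset (ZMod 12)) := by
  obtain ⟨mf, rfl⟩ := exists_mask S
  rw [max_bridge, key_s6 mf.val mf.isLt]
  rw [s1, s2, s3, s4, s5, s6, s7]
  rw [exists_congr (fun t : ZMod 12 => or_congr (translate_bridge _ _ _) (or_congr
    (translate_bridge _ _ _) (or_congr (translate_bridge _ _ _) (or_congr
    (translate_bridge _ _ _) (or_congr (translate_bridge _ _ _) (or_congr
    (translate_bridge _ _ _) (translate_bridge _ _ _)))))))]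
  constructor
  · rintro ⟨t, ht, h⟩
    refine ⟨(t : ZMod 12), ?_⟩
    rw [ZMod.val_cast_of_lt ht]
    rcases h with h|h|h|h|h|h|h
    · exact Or.inl ((eqRot_iff mf.isLt ht mk1 rf1 rotTab1).mpr h)
    · exact Or.inr (Or.inl ((eqRot_iff mf.isLt ht mk2 rf2 rotTab2).mpr h))
    · exact Or.inr (Or.inr (Or.inl ((eqRot_iff mf.isLt ht mk3 rf3 rotTab3).mpr h)))
    · exact Or.inr (Or.inr (Or.inr (Or.inl ((eqRot_iff mf.isLt ht mk4 rf4 rotTab4).mpr h))))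
    · exact Or.inr (Or.inr (Or.inr (Or.inr (Or.inl ((eqRot_iff mf.isLt ht mk5 rf5 rotTab5).mpr h)))))
    · exact Or.inr (Or.inr (Or.inr (Or.inr (Or.inr (Or.inl ((eqRot_iff mf.isLt ht mk6 rf6 rotTab6).mpr h))))))
    · exact Or.inr (Or.inr (Or.inr (Or.inr (Or.inr (Or.inr ((eqRot_iff mf.isLt ht mk7 rf7 rotTab7).mpr h))))))
  · rintro ⟨t, h⟩
    refine ⟨t.val, ZMod.val_lt t, ?_⟩
    rcases h with h|h|h|h|h|h|h
    · exact Or.inl ((eqRot_iff mf.isLt (ZMod.val_lt t) mk1 rf1 rotTab1).mp h)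
    · exact Or.inr (Or.inl ((eqRot_iff mf.isLt (ZMod.val_lt t) mk2 rf2 rotTab2).mp h))
    · exact Or.inr (Or.inr (Or.inl ((eqRot_iff mf.isLt (ZMod.val_lt t) mk3 rf3 rotTab3).mp h)))
    · exact Or.inr (Or.inr (Or.inr (Or.inl ((eqRot_iff mf.isLt (ZMod.val_lt t) mk4 rf4 rotTab4).mp h))))
    · exact Or.inr (Or.inr (Or.inr (Or.inr (Or.inl ((eqRot_iff mf.isLt (ZMod.val_lt t) mk5 rf5 rotTab5).mp h)))))
    · exact Or.inr (Or.inr (Or.inr (Or.inr (Or.inr (Or.inl ((eqRot_iff mf.isLt (ZMod.val_lt t) mk6 rf6 rotTab6).mp h))))))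
    · exact Or.inr (Or.inr (Or.inr (Or.inr (Or.inr (Or.inr ((eqRot_iff mf.isLt (ZMod.val_lt t) mk7 rf7 rotTab7).mp h))))))
end

section
/- Observation 2: if S is a maximal non-chromatic scale and t is such that t ∈ S, t+3 ∈ S, and t+1 ∉ S and t+2 ∉ S (an interval of length three between consecutive pitch classes of S), then t-1 ∈ S and t+4 ∈ S (both neighboring intervals of the interval of length three are semitones). -/
theorem maximal_nonchromatic_minor_third_neighbors (S : Finset (ZMod 12)) (h : MaximalNC S)
    (t : ZMod 12) (ht : t ∈ S) (ht3 : t + 3 ∈ S) (ht1 : t + 1 ∉ S) (ht2 : t + 2 ∉ S) :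
    t - 1 ∈ S ∧ t + 4 ∈ S := by
  obtain ⟨hS, hmax⟩ := h
  have hcancel : ∀ a b : ZMod 12, t + a = t + b → a = b := fun a b e => by
    have := add_left_cancel e; exact this
  constructor
  · have h1 := hmax (insert (t + 1) S) (Finset.ssubset_insert ht1)
    simp only [NonChromatic, not_forall, not_not] at h1
    obtain ⟨u, hu0, hu1, hu2⟩ := h1
    rcases Finset.mem_insert.mp hu0 with e | hu0'
    · exfalso
      rcases Finset.mem_insert.mp hu1 with e1 | h1'
      · rw [e] at e1
        have : (2 : ZMod 12) = 1 := hcancel 2 1 (by rw [← e1]; ring)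
        exact absurd this (by decide)
      · rw [e] at h1'
        have : t + 1 + 1 = t + 2 := by ring
        rw [this] at h1'
        exact ht2 h1'
    · rcases Finset.mem_insert.mp hu1 with e1 | hu1'
      · exfalso
        rcases Finset.mem_insert.mp hu2 with e2 | h2'
        · rw [← e1] at e2
          have : u + 2 = u + 1 := e2
          have := add_left_cancel this
          exact absurd this (by decide)
        · have : u + 2 = t + 2 := by rw [show u = t from add_right_cancel e1]
          rw [this] at h2'
          exact ht2 h2'
      · rcases Finset.mem_insert.mp hu2 with e2 | h2'
        · have hu : u = t - 1 := by linear_combination e2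
          rw [hu] at hu0'
          exact hu0'
        · exact absurd ⟨hu0', hu1', h2'⟩ (hS u)
  · have h1 := hmax (insert (t + 2) S) (Finset.ssubset_insert ht2)
    simp only [NonChromatic, not_forall, not_not] at h1
    obtain ⟨u, hu0, hu1, hu2⟩ := h1
    rcases Finset.mem_insert.mp hu0 with e | hu0'
    · -- u = t + 2, so u + 2 = t + 4 ∈ T
      rcases Finset.mem_insert.mp hu2 with e2 | h2'
      · exfalso
        rw [e] at e2
        have : (4 : ZMod 12) = 2 := hcancel 4 2 (by rw [show t + 4 = t + 2 + 2 by ring, e2])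
        exact absurd this (by decide)
      · rw [e, show t + 2 + 2 = t + 4 from by ring] at h2'
        exact h2'
    · rcases Finset.mem_insert.mp hu1 with e1 | hu1'
      · -- u + 1 = t + 2 so u = t + 1 ∈ S, contradiction
        exfalso
        have hu : u = t + 1 := by linear_combination e1
        rw [hu] at hu0'
        exact ht1 hu0'
      · rcases Finset.mem_insert.mp hu2 with e2 | h2'
        · exfalso
          have hu : u = t := by linear_combination e2
          rw [hu] at hu1'
          exact ht1 hu1'
        · exact absurd ⟨hu0', hu1', h2'⟩ (hS u)
end

section
/- The harmonic minor scale {0,2,3,5,7,8,11} and the harmonic major scale {0,2,4,5,7,8,11} are maximal non-chromatic scales, and each has exactly 12 pairwise distinct translates, all of which are maximal non-chromatic. -/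
lemma mem_translate (t a : ZMod 12) (S : Finset (ZMod 12)) :
    a ∈ translateScale t S ↔ a - t ∈ S := by
  simp only [translateScale, Finset.mem_image]
  constructor
  · rintro ⟨x, hx, rfl⟩; simpa using hx
  · intro h; exact ⟨a - t, h, by ring⟩

lemma maximal_of_local (S : Finset (ZMod 12)) (h1 : NonChromatic S)
    (h2 : ∀ x : ZMod 12, x ∉ S → ¬ NonChromatic (insert x S)) : MaximalNC S := by
  refine ⟨h1, fun T hT hNC => ?_⟩
  obtain ⟨x, hxT, hxS⟩ := Finset.exists_of_ssubset hT
  exact h2 x hxS (fun t ht => hNC t ⟨by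
    rcases Finset.mem_insert.1 ht.1 with h | h
    · exact h ▸ hxT
    · exact hT.1 h, by
    rcases Finset.mem_insert.1 ht.2.1 with h | h
    · exact h ▸ hxT
    · exact hT.1 h, by
    rcases Finset.mem_insert.1 ht.2.2 with h | h
    · exact h ▸ hxT
    · exact hT.1 h⟩)

lemma maximalNC_translate (t : ZMod 12) (S : Finset (ZMod 12)) (h : MaximalNC S) :
    MaximalNC (translateScale t S) := by
  obtain ⟨h1, h2⟩ := h
  constructor
  · intro u hu
    rw [mem_translate, mem_translate, mem_translate] at hu
    exact h1 (u - t) ⟨hu.1, by rw [show u - t + 1 = u + 1 - t by ring]; exact hu.2.1,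
      by rw [show u - t + 2 = u + 2 - t by ring]; exact hu.2.2⟩
  · intro T hT hNC
    have hsub : S ⊂ translateScale (-t) T := by
      constructor
      · intro x hx
        rw [mem_translate, sub_neg_eq_add]
        exact hT.1 (by rw [mem_translate, add_sub_cancel_right]; exact hx)
      · intro hcon
        obtain ⟨y, hyT, hyS⟩ := Finset.exists_of_ssubset hT
        have hy : y - t ∈ S :=
          hcon (by rw [mem_translate, sub_neg_eq_add, sub_add_cancel]; exact hyT)
        exact hyS ((mem_translate t y S).mpr hy)
    refine h2 _ hsub (fun u hu => ?_)
    rw [mem_translate, mem_translate, mem_translate, sub_neg_eq_add, sub_neg_eq_add,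
      sub_neg_eq_add] at hu
    exact hNC (u + t) ⟨hu.1,
      by rw [show u + t + 1 = u + 1 + t by ring]; exact hu.2.1,
      by rw [show u + t + 2 = u + 2 + t by ring]; exact hu.2.2⟩

lemma translate_inj (S : Finset (ZMod 12))
    (h : ∀ t : ZMod 12, translateScale t S = S → t = 0) :
    Function.Injective (fun t : ZMod 12 => translateScale t S) := by
  intro a b hab
  simp only at hab
  have key : translateScale (a - b) S = S := by
    ext x
    rw [mem_translate]
    have := Finset.ext_iff.1 hab (x - (a - b) + a)
    rw [mem_translate, mem_translate] at this
    rw [show x - (a - b) + a - a = x - (a - b) by ring] at this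
    rw [this, show x - (a - b) + a - b = x by ring]
  exact sub_eq_zero.mp (h _ key)

theorem harmonic_scales_maximal :
    (MaximalNC ({0,2,3,5,7,8,11} : Finset (ZMod 12)) ∧
     (∀ t : ZMod 12, MaximalNC (translateScale t ({0,2,3,5,7,8,11} : Finset (ZMod 12)))) ∧
     (Finset.univ.image
       (fun t : ZMod 12 => translateScale t ({0,2,3,5,7,8,11} : Finset (ZMod 12)))).card = 12) ∧
    (MaximalNC ({0,2,4,5,7,8,11} : Finset (ZMod 12)) ∧
     (∀ t : ZMod 12, MaximalNC (translateScale t ({0,2,4,5,7,8,11} : Finset (ZMod 12)))) ∧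
     (Finset.univ.image
       (fun t : ZMod 12 => translateScale t ({0,2,4,5,7,8,11} : Finset (ZMod 12)))).card = 12) := by
  refine ⟨⟨maximal_of_local _ (by decide) (by decide), fun t => maximalNC_translate _ _ (maximal_of_local _ (by decide) (by decide)), ?_⟩, maximal_of_local _ (by decide) (by decide), fun t => maximalNC_translate _ _ (maximal_of_local _ (by decide) (by decide)), ?_⟩
  · rw [Finset.card_image_of_injective _ (translate_inj _ (by decide))]; rfl
  · rw [Finset.card_image_of_injective _ (translate_inj _ (by decide))]; rfl
end

section
/- Let M = {1,2,3,5,6,7,9,10,11} be the complement of the augmented triad {0,4,8} in ZMod 12. A subset S of M with 6 elements is non-chromatic if and only if S contains exactly two elements from each of the three blocks {1,2,3}, {5,6,7}, and {9,10,11}. -/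
set_option maxRecDepth 100000
set_option maxHeartbeats 4000000


theorem messiaen_hexatonic_characterization (S : Finset (ZMod 12))
    (hS : S ⊆ ({1,2,3,5,6,7,9,10,11} : Finset (ZMod 12))) (hcard : S.card = 6) :
    NonChromatic S ↔
      (S ∩ ({1,2,3} : Finset (ZMod 12))).card = 2 ∧
      (S ∩ ({5,6,7} : Finset (ZMod 12))).card = 2 ∧
      (S ∩ ({9,10,11} : Finset (ZMod 12))).card = 2 := by
  set A : Finset (ZMod 12) := {1,2,3} with hA
  set B : Finset (ZMod 12) := {5,6,7} with hB
  set C : Finset (ZMod 12) := {9,10,11} with hC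
  have hMsplit : ({1,2,3,5,6,7,9,10,11} : Finset (ZMod 12)) = A ∪ B ∪ C := by decide
  have hSsplit : S = (S ∩ A) ∪ (S ∩ B) ∪ (S ∩ C) := by
    rw [← Finset.inter_union_distrib_left, ← Finset.inter_union_distrib_left, ← hMsplit]
    exact (Finset.inter_eq_left.mpr hS).symm
  have keyAB : ∀ u : ZMod 12, u ∈ ({1,2,3} : Finset (ZMod 12)) → u ∈ ({5,6,7} : Finset (ZMod 12)) → False := by decide
  have keyAC : ∀ u : ZMod 12, u ∈ ({1,2,3} : Finset (ZMod 12)) → u ∈ ({9,10,11} : Finset (ZMod 12)) → False := by decide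
  have keyBC : ∀ u : ZMod 12, u ∈ ({5,6,7} : Finset (ZMod 12)) → u ∈ ({9,10,11} : Finset (ZMod 12)) → False := by decide
  have hdAB : Disjoint (S ∩ A) (S ∩ B) := by
    rw [Finset.disjoint_left]
    intro a ha hb
    have h1 := Finset.mem_inter.mp ha |>.2
    have h2 := Finset.mem_inter.mp hb |>.2
    rw [hA] at h1; rw [hB] at h2
    exact keyAB a h1 h2
  have hdC : Disjoint ((S ∩ A) ∪ (S ∩ B)) (S ∩ C) := by
    rw [Finset.disjoint_left]
    intro a ha hc
    have h2 := Finset.mem_inter.mp hc |>.2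
    rw [hC] at h2
    rcases Finset.mem_union.mp ha with h | h
    · have h1 := Finset.mem_inter.mp h |>.2
      rw [hA] at h1
      exact keyAC a h1 h2
    · have h1 := Finset.mem_inter.mp h |>.2
      rw [hB] at h1
      exact keyBC a h1 h2
  have hsum : (S ∩ A).card + (S ∩ B).card + (S ∩ C).card = 6 := by
    rw [← Finset.card_union_of_disjoint hdAB, ← Finset.card_union_of_disjoint hdC,
      ← hSsplit, hcard]
  have hcA : (S ∩ A).card ≤ 3 := le_trans (Finset.card_le_card Finset.inter_subset_right) (by rw [hA]; decide)
  have hcB : (S ∩ B).card ≤ 3 := le_trans (Finset.card_le_card Finset.inter_subset_right) (by rw [hB]; decide)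
  have hcC : (S ∩ C).card ≤ 3 := le_trans (Finset.card_le_card Finset.inter_subset_right) (by rw [hC]; decide)
  constructor
  · intro hNC
    have keyA : (S ∩ A).card ≠ 3 := by
      intro h3
      have : S ∩ A = A := Finset.eq_of_subset_of_card_le Finset.inter_subset_right (by rw [hA] at h3 ⊢; rw [h3]; decide)
      have hsub : A ⊆ S := by rw [← this]; exact Finset.inter_subset_left
      exact hNC 1 ⟨hsub (by rw [hA]; decide), hsub (by rw [hA]; decide), hsub (by rw [hA]; decide)⟩
    have keyB : (S ∩ B).card ≠ 3 := by
      intro h3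
      have : S ∩ B = B := Finset.eq_of_subset_of_card_le Finset.inter_subset_right (by rw [hB] at h3 ⊢; rw [h3]; decide)
      have hsub : B ⊆ S := by rw [← this]; exact Finset.inter_subset_left
      exact hNC 5 ⟨hsub (by rw [hB]; decide), hsub (by rw [hB]; decide), hsub (by rw [hB]; decide)⟩
    have keyC : (S ∩ C).card ≠ 3 := by
      intro h3
      have : S ∩ C = C := Finset.eq_of_subset_of_card_le Finset.inter_subset_right (by rw [hC] at h3 ⊢; rw [h3]; decide)
      have hsub : C ⊆ S := by rw [← this]; exact Finset.inter_subset_left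
      exact hNC 9 ⟨hsub (by rw [hC]; decide), hsub (by rw [hC]; decide), hsub (by rw [hC]; decide)⟩
    omega
  · rintro ⟨h2A, h2B, h2C⟩ t ⟨ht0, ht1, ht2⟩
    have hm0 := hS ht0
    have hm1 := hS ht1
    have hm2 := hS ht2
    have key : ∀ u : ZMod 12, u ∈ ({1,2,3,5,6,7,9,10,11} : Finset (ZMod 12)) →
        u + 1 ∈ ({1,2,3,5,6,7,9,10,11} : Finset (ZMod 12)) →
        u + 2 ∈ ({1,2,3,5,6,7,9,10,11} : Finset (ZMod 12)) → u = 1 ∨ u = 5 ∨ u = 9 := by decide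
    have htcases : t = 1 ∨ t = 5 ∨ t = 9 := key t hm0 hm1 hm2
    rcases htcases with rfl | rfl | rfl
    · have hsub : A ⊆ S := by
        intro x hx
        rw [hA] at hx
        fin_cases hx
        · exact ht0
        · exact ht1
        · exact ht2
      have : S ∩ A = A := Finset.inter_eq_right.mpr hsub
      rw [this, hA] at h2A
      exact absurd h2A (by decide)
    · have hsub : B ⊆ S := by
        intro x hx
        rw [hB] at hx
        fin_cases hx
        · exact ht0
        · exact ht1
        · exact ht2
      have : S ∩ B = B := Finset.inter_eq_right.mpr hsub
      rw [this, hB] at h2B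
      exact absurd h2B (by decide)
    · have hsub : C ⊆ S := by
        intro x hx
        rw [hC] at hx
        fin_cases hx
        · exact ht0
        · exact ht1
        · exact ht2
      have : S ∩ C = C := Finset.inter_eq_right.mpr hsub
      rw [this, hC] at h2C
      exact absurd h2C (by decide)
end
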